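/- Let W be the symmetric group S_{n+1} viewed as a Coxeter group of type A_n with simple reflections s_1, ..., s_n. Then (w₀^{I−{1}} w₀^I) ▷ w₀^{I−{1}} = w₀^{I−{1,2}}, where w₀^J denotes the longest element of the parabolic subgroup W_J and ▷ is defined by x ▷ y = min{uy : u ≤ x} in Bruhat order. -/

import Mathlib

/-!
Let `sᵢ` (`i : Fin n`, labels shifted down by one) act on `Fin (n + 1)` by swapping `i` and
`i + 1`. The length of `w` equals the number of inversions of its permutation: the key point is
that a right ascent of `w` is an ascent of the permutation, proved by induction on the length
using the commutation and braid relations. So the action is faithful, `w₀^{≥a}` (the longest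
element generated by `s_a, …, s_{n-1}`) reverses the block `[a, n]`, and
`x = w₀^{≥1} w₀` is the cycle with reduced word `s₀ s₁ ⋯ s_{n-1}`.

Its subword `u = s₁ ⋯ s_{n-1}` satisfies `u w₀^{≥1} = w₀^{≥2}`. Every `u ≤ x` has
`ℓ(u w₀^{≥1}) ≥ ℓ(w₀^{≥2})`: for `u = x` by counting inversions, and for `u < x` because
`ℓ u ≤ n - 1 = ℓ(w₀^{≥1}) - ℓ(w₀^{≥2})`. Hence `w₀^{≥2}` is a minimal element of
`{u w₀^{≥1} | u ≤ x}`, so it is the unique one.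
-/

/-- The Bruhat order on a Coxeter group, via the subword property: `x ≤ y` iff some
reduced word for `y` has a subword whose product is `x`. -/
def CoxeterSystem.bruhatLE {B W : Type*} [Group W] {M : CoxeterMatrix B}
    (cs : CoxeterSystem M W) (x y : W) : Prop :=
  ∃ ω ω' : List B, cs.IsReduced ω ∧ cs.wordProd ω = y ∧
    List.Sublist ω' ω ∧ cs.wordProd ω' = x

/-- The set of products `u * y` with `u ≤ x` in the Bruhat order. -/
def CoxeterSystem.triSet {B W : Type*} [Group W] {M : CoxeterMatrix B}
    (cs : CoxeterSystem M W) (x y : W) : Set W :=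
  {w | ∃ u : W, cs.bruhatLE u x ∧ w = u * y}

/-- `m` is the unique minimal element of `S` with respect to the Bruhat order. -/
def CoxeterSystem.IsUniqueBruhatMin {B W : Type*} [Group W] {M : CoxeterMatrix B}
    (cs : CoxeterSystem M W) (S : Set W) (m : W) : Prop :=
  (m ∈ S ∧ ∀ z ∈ S, cs.bruhatLE z m → z = m) ∧
    ∀ z ∈ S, (∀ z' ∈ S, cs.bruhatLE z' z → z' = z) → z = m

open Equiv Finset

namespace CoxeterSystem

variable {B W : Type*} [Group W] {M : CoxeterMatrix B} (cs : CoxeterSystem M W)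

local prefix:100 "s" => cs.simple
local prefix:100 "π" => cs.wordProd
local prefix:100 "ℓ" => cs.length

theorem simple_mul_simple_comm_of_eq_two {i j : B} (h : M i j = 2) :
    s i * s j = s j * s i := by
  simpa [braidWord, alternatingWord, h, M.symmetric j i, wordProd] using
    (cs.wordProd_braidWord_eq j i).symm

theorem simple_braid_of_eq_three {i j : B} (h : M i j = 3) :
    s i * s j * s i = s j * s i * s j := by
  simpa [braidWord, alternatingWord, h, M.symmetric j i, wordProd, mul_assoc] using
    cs.wordProd_braidWord_eq j i

theorem length_mul_simple_lt_of_comm {w : W} {i j : B} (hij : s i * s j = s j * s i)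
    (hj : ℓ (w * s j) < ℓ w) (hi : ℓ w < ℓ (w * s i)) :
    ℓ (w * s j) < ℓ (w * s j * s i) := by
  rw [mul_assoc, ← hij, ← mul_assoc]
  rcases cs.length_mul_simple (w * s i) j with h | h <;> omega

theorem length_mul_simple_lt_or_of_braid {w : W} {i j : B}
    (hij : s i * s j * s i = s j * s i * s j)
    (hj : ℓ (w * s j) < ℓ w) (hi : ℓ w < ℓ (w * s i)) :
    ℓ (w * s j) < ℓ (w * s j * s i) ∨
      ℓ (w * s j * s i) < ℓ (w * s j) ∧ ℓ (w * s j * s i) < ℓ (w * s j * s i * s j) := by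
  by_contra! h
  have hji : ℓ (w * s j * s i) < ℓ (w * s j) :=
    h.1.lt_of_ne (cs.length_mul_simple_ne (w * s j) i)
  have hjij : ℓ (w * s j * s i * s j) < ℓ (w * s j * s i) :=
    (h.2 hji).lt_of_ne (cs.length_mul_simple_ne (w * s j * s i) j)
  have hw : w * s i = w * s j * s i * s j * s i * s j := by
    simp only [mul_assoc, ← hij]
    simp [← mul_assoc]
  have h₁ := cs.length_mul_simple (w * s j * s i * s j) i
  have h₂ := cs.length_mul_simple (w * s j * s i * s j * s i) j
  rw [← hw] at h₂
  omega

variable {cs}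

theorem bruhatLE.eq_or_length_lt {u w : W} (h : cs.bruhatLE u w) : u = w ∨ ℓ u < ℓ w := by
  obtain ⟨ω, ω', hω, rfl, hsub, rfl⟩ := h
  rcases hsub.length_le.eq_or_lt with heq | hlt
  · exact .inl (by rw [hsub.eq_of_length heq])
  · exact .inr ((cs.length_wordProd_le ω').trans_lt (hω.eq ▸ hlt))

theorem bruhatLE.eq_of_length_le {u w : W} (h : cs.bruhatLE u w) (hl : ℓ w ≤ ℓ u) : u = w :=
  h.eq_or_length_lt.resolve_right (not_lt.2 hl)

variable (cs)

theorem wordProd_mem_closure_simple_image {J : Set B} {ω : List B} (h : ∀ i ∈ ω, i ∈ J) :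
    π ω ∈ Subgroup.closure (cs.simple '' J) :=
  Subgroup.list_prod_mem _ (by
    simpa using fun i hi => Subgroup.subset_closure (Set.mem_image_of_mem cs.simple (h i hi)))

end CoxeterSystem

namespace TypeA

open CoxeterSystem

variable {n : ℕ}

def adjSwap (i : Fin n) : Perm (Fin (n + 1)) := swap i.castSucc i.succ

lemma adjSwap_apply_val_cases (i : Fin n) (x : Fin (n + 1)) :
    (x.val = i.val ∧ (adjSwap i x).val = i.val + 1) ∨
      (x.val = i.val + 1 ∧ (adjSwap i x).val = i.val) ∨
      (x.val ≠ i.val ∧ x.val ≠ i.val + 1 ∧ (adjSwap i x).val = x.val) := by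
  unfold adjSwap
  rw [swap_apply_def]
  split_ifs <;> simp_all [Fin.ext_iff]

lemma adjSwap_apply_eq_of_val {j : Fin n} {x y : Fin (n + 1)}
    (h : (x.val = j.val ∧ y.val = j.val + 1) ∨ (x.val = j.val + 1 ∧ y.val = j.val) ∨
      (x.val ≠ j.val ∧ x.val ≠ j.val + 1 ∧ y.val = x.val)) : adjSwap j x = y :=
  Fin.ext (by have := adjSwap_apply_val_cases j x; omega)

lemma adjSwap_mul_self (i : Fin n) : adjSwap i * adjSwap i = 1 := swap_mul_self _ _

lemma isLiftable_adjSwap : (CoxeterMatrix.A n).IsLiftable (adjSwap (n := n)) := by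
  intro i j
  simp only [CoxeterMatrix.A, Matrix.of_apply]
  split_ifs with hij hadj
  · simp [hij, adjSwap_mul_self]
  all_goals
    ext x
    simp only [pow_succ, pow_zero, one_mul, Perm.mul_apply, Perm.one_apply]
    have := adjSwap_apply_val_cases j x
    have := adjSwap_apply_val_cases i (adjSwap j x)
    have := adjSwap_apply_val_cases j (adjSwap i (adjSwap j x))
    have := adjSwap_apply_val_cases i (adjSwap j (adjSwap i (adjSwap j x)))
    have := adjSwap_apply_val_cases j (adjSwap i (adjSwap j (adjSwap i (adjSwap j x))))
    have := adjSwap_apply_val_cases i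
      (adjSwap j (adjSwap i (adjSwap j (adjSwap i (adjSwap j x)))))
    omega

def inversions (σ : Perm (Fin (n + 1))) : Finset (Fin (n + 1) × Fin (n + 1)) :=
  {p | p.1 < p.2 ∧ σ p.2 < σ p.1}

def invCount (σ : Perm (Fin (n + 1))) : ℕ := #(inversions σ)

lemma mem_inversions {σ : Perm (Fin (n + 1))} {p : Fin (n + 1) × Fin (n + 1)} :
    p ∈ inversions σ ↔ p.1 < p.2 ∧ σ p.2 < σ p.1 := by
  simp [inversions]

lemma invCount_one : invCount (1 : Perm (Fin (n + 1))) = 0 := by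
  rw [invCount, card_eq_zero, eq_empty_iff_forall_notMem]
  exact fun p hp => lt_asymm (mem_inversions.1 hp).1 (mem_inversions.1 hp).2

lemma inversions_mul_adjSwap {σ : Perm (Fin (n + 1))} {i : Fin n}
    (h : σ i.castSucc < σ i.succ) :
    inversions (σ * adjSwap i) = insert (i.castSucc, i.succ)
      ((inversions σ).map ((adjSwap i).prodCongr (adjSwap i)).toEmbedding) := by
  ext p
  have hs : (adjSwap i).symm = adjSwap i := symm_swap _ _
  rw [mem_insert, mem_map_equiv, mem_inversions, mem_inversions]
  simp only [prodCongr_symm, hs, prodCongr_apply, Prod.map_fst, Prod.map_snd, Perm.mul_apply]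
  by_cases hq : p = (i.castSucc, i.succ)
  · subst hq
    simp [adjSwap, h]
  by_cases hq' : p = (i.succ, i.castSucc)
  · subst hq'
    simp [adjSwap, not_lt.2 h.le, not_lt.2 (Fin.castSucc_lt_succ (i := i)).le,
      (Fin.castSucc_lt_succ (i := i)).ne]
  have hlt : p.1 < p.2 ↔ adjSwap i p.1 < adjSwap i p.2 := by
    simp only [Prod.ext_iff, Fin.ext_iff, Fin.val_castSucc, Fin.val_succ] at hq hq'
    rw [Fin.lt_def, Fin.lt_def]
    have := adjSwap_apply_val_cases i p.1
    have := adjSwap_apply_val_cases i p.2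
    omega
  rw [hlt]
  tauto

lemma invCount_mul_adjSwap_of_lt {σ : Perm (Fin (n + 1))} {i : Fin n}
    (h : σ i.castSucc < σ i.succ) : invCount (σ * adjSwap i) = invCount σ + 1 := by
  rw [invCount, inversions_mul_adjSwap h, card_insert_of_notMem, card_map, invCount]
  rw [mem_map_equiv, mem_inversions]
  simp [adjSwap, not_lt.2 (Fin.castSucc_lt_succ (i := i)).le]

lemma invCount_mul_adjSwap_le (σ : Perm (Fin (n + 1))) (i : Fin n) :
    invCount (σ * adjSwap i) ≤ invCount σ + 1 := by
  rcases lt_or_gt_of_ne (σ.injective.ne (Fin.castSucc_lt_succ (i := i)).ne) with h | h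
  · exact (invCount_mul_adjSwap_of_lt h).le
  · have h' : (σ * adjSwap i) i.castSucc < (σ * adjSwap i) i.succ := by simpa [adjSwap] using h
    have := invCount_mul_adjSwap_of_lt h'
    rw [mul_assoc, adjSwap_mul_self, mul_one] at this
    omega

lemma castSucc_lt_succ_of_adjacent {σ : Perm (Fin (n + 1))} {i j : Fin n}
    (hadj : j.val + 1 = i.val ∨ i.val + 1 = j.val)
    (hj : (σ * adjSwap j) j.castSucc < (σ * adjSwap j) j.succ)
    (hi : (σ * adjSwap j) i.castSucc < (σ * adjSwap j) i.succ ∨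
      (σ * adjSwap j * adjSwap i) j.castSucc < (σ * adjSwap j * adjSwap i) j.succ) :
    σ i.castSucc < σ i.succ := by
  simp only [Perm.mul_apply] at hj hi
  rcases hadj with h | h
  · have e₁ : adjSwap j j.castSucc = i.castSucc := adjSwap_apply_eq_of_val (by simp; omega)
    have e₂ : adjSwap j j.succ = j.castSucc := adjSwap_apply_eq_of_val (by simp)
    have e₃ : adjSwap j i.castSucc = j.castSucc := adjSwap_apply_eq_of_val (by simp; omega)
    have e₄ : adjSwap j i.succ = i.succ := adjSwap_apply_eq_of_val (by simp; omega)
    have e₅ : adjSwap i j.castSucc = j.castSucc := adjSwap_apply_eq_of_val (by simp; omega)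
    have e₆ : adjSwap i j.succ = i.succ := adjSwap_apply_eq_of_val (by simp; omega)
    simp only [e₁, e₂, e₃, e₄, e₅, e₆] at hj hi
    exact hi.elim hj.trans id
  · have e₁ : adjSwap j j.castSucc = j.succ := adjSwap_apply_eq_of_val (by simp)
    have e₂ : adjSwap j j.succ = i.succ := adjSwap_apply_eq_of_val (by simp; omega)
    have e₃ : adjSwap j i.castSucc = i.castSucc := adjSwap_apply_eq_of_val (by simp; omega)
    have e₄ : adjSwap j i.succ = j.succ := adjSwap_apply_eq_of_val (by simp; omega)
    have e₅ : adjSwap i j.castSucc = i.castSucc := adjSwap_apply_eq_of_val (by simp; omega)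
    have e₆ : adjSwap i j.succ = j.succ := adjSwap_apply_eq_of_val (by simp; omega)
    simp only [e₁, e₂, e₃, e₄, e₅, e₆] at hj hi
    exact hi.elim (·.trans hj) id

def ascWord (a : ℕ) : List (Fin n) := (List.finRange n).drop a

/-- `revWord (n - a) a = [n-1, …, a] ++ [n-1, …, a+1] ++ ⋯ ++ [n-1]`, a reduced word for the
reversal of the block `[a, n]`, the longest element generated by `s_a, …, s_{n-1}`. -/
def revWord : ℕ → ℕ → List (Fin n)
  | 0, _ => []
  | f + 1, a => (ascWord a).reverse ++ revWord f (a + 1)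

/- The permutations computed below, written as functions on the values `0, …, n` so that `omega`
can reason about them: the cycle `a ↦ a + 1 ↦ ⋯ ↦ n ↦ a`, its inverse, and the reversal of the
block `[a, n]`. -/
def cycleVal (n a v : ℕ) : ℕ := if v = n then a else if a ≤ v then v + 1 else v

def cycleInvVal (n a v : ℕ) : ℕ := if v = a then n else if a < v ∧ v ≤ n then v - 1 else v

def revVal (n a v : ℕ) : ℕ := if a ≤ v ∧ v ≤ n then n + a - v else v

lemma ascWord_eq_cons {a : ℕ} (ha : a < n) : ascWord a = ⟨a, ha⟩ :: ascWord (n := n) (a + 1) := by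
  rw [ascWord, List.drop_eq_getElem_cons (by simpa using ha)]
  simp [ascWord]

lemma length_ascWord (a : ℕ) : (ascWord (n := n) a).length = n - a := by
  simp [ascWord]

lemma le_of_mem_ascWord {a : ℕ} {i : Fin n} (h : i ∈ ascWord a) : a ≤ i.val := by
  obtain ⟨k, hk, rfl⟩ := List.mem_iff_getElem.1 h
  simp [ascWord]

lemma le_of_mem_revWord {f a : ℕ} {i : Fin n} (h : i ∈ revWord f a) : a ≤ i.val := by
  induction f generalizing a with
  | zero => simp [revWord] at h
  | succ f ih =>
    rcases List.mem_append.1 h with h | h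
    · exact le_of_mem_ascWord (List.mem_reverse.1 h)
    · exact (ih h).trans' (Nat.le_succ a)

lemma val_inv_apply {σ : Perm (Fin (n + 1))} {f g : ℕ → ℕ} (hσ : ∀ x, (σ x).val = f x.val)
    (hg : ∀ v ≤ n, g v ≤ n ∧ f (g v) = v) (x : Fin (n + 1)) : (σ⁻¹ x).val = g x.val := by
  obtain ⟨hle, hfg⟩ := hg x.val (Nat.lt_succ_iff.1 x.isLt)
  have : σ ⟨g x.val, Nat.lt_succ_of_le hle⟩ = x := Fin.ext (by rw [hσ, hfg])
  rw [Perm.inv_eq_iff_eq.2 this.symm]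

def pairsFrom (a : ℕ) : Finset (Fin (n + 1) × Fin (n + 1)) := {p | a ≤ p.1.val ∧ p.1 < p.2}

lemma mem_pairsFrom {a : ℕ} {p : Fin (n + 1) × Fin (n + 1)} :
    p ∈ pairsFrom a ↔ a ≤ p.1.val ∧ p.1 < p.2 := by
  simp [pairsFrom]

lemma inversions_eq_pairsFrom {σ : Perm (Fin (n + 1))} {a : ℕ}
    (hσ : ∀ x, (σ x).val = revVal n a x.val) : inversions σ = pairsFrom a := by
  ext p
  rw [mem_inversions, mem_pairsFrom, Fin.lt_def, Fin.lt_def, hσ, hσ]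
  have := p.1.isLt
  have := p.2.isLt
  simp only [revVal]
  split_ifs <;> omega

lemma inversions_subset_pairsFrom {σ : Perm (Fin (n + 1))} {a : ℕ}
    (hσ : ∀ x : Fin (n + 1), x.val < a → σ x = x) : inversions σ ⊆ pairsFrom a := by
  intro p hp
  rw [mem_inversions] at hp
  refine mem_pairsFrom.2 ⟨not_lt.1 fun h => ?_, hp.1⟩
  have h₁ := hσ _ h
  rw [h₁] at hp
  have h₂ := σ.injective (hσ _ ((Fin.lt_def.1 hp.2).trans h))
  rw [h₂] at hp
  exact lt_asymm hp.1 hp.2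

lemma card_pairsFrom_succ_add_le (a : ℕ) :
    #(pairsFrom (n := n) (a + 1)) + (n - a) ≤ #(pairsFrom (n := n) a) := by
  have hsplit := card_filter_add_card_filter_not (s := pairsFrom (n := n) a) (·.1.val = a)
  have hrest : (pairsFrom a).filter (¬ ·.1.val = a) = pairsFrom (n := n) (a + 1) := by
    ext p
    simp only [mem_filter, mem_pairsFrom]
    omega
  have hfirst : n - a ≤ #((pairsFrom (n := n) a).filter (·.1.val = a)) := by
    calc n - a = #(univ : Finset (Fin (n - a))) := by simp
      _ ≤ _ := card_le_card_of_injOn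
          (fun k => ((⟨a, by have := k.isLt; omega⟩ : Fin (n + 1)),
            (⟨a + 1 + k, by have := k.isLt; omega⟩ : Fin (n + 1))))
          (fun k _ => mem_filter.2 ⟨mem_pairsFrom.2 ⟨le_rfl, Fin.lt_def.2 (by simp; omega)⟩, rfl⟩)
          (fun k _ l _ h => by simp only [Prod.mk.injEq, Fin.mk.injEq] at h; ext; omega)
  rw [hrest] at hsplit
  omega

section Representation

variable {W : Type*} [Group W] (cs : CoxeterSystem (CoxeterMatrix.A n) W)

local prefix:100 "s" => cs.simple
local prefix:100 "π" => cs.wordProd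
local prefix:100 "ℓ" => cs.length

def permRep : W →* Perm (Fin (n + 1)) := cs.lift ⟨adjSwap, isLiftable_adjSwap⟩

lemma permRep_simple (i : Fin n) : permRep cs (s i) = adjSwap i :=
  cs.lift_apply_simple isLiftable_adjSwap i

lemma invCount_permRep_wordProd_le (ω : List (Fin n)) :
    invCount (permRep cs (π ω)) ≤ ω.length := by
  induction ω using List.reverseRecOn with
  | nil => simp [invCount_one]
  | append_singleton ω i ih =>
    rw [cs.wordProd_append, cs.wordProd_singleton, map_mul, permRep_simple, List.length_append,
      List.length_singleton]
    exact (invCount_mul_adjSwap_le _ i).trans (by omega)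

lemma invCount_permRep_le_length (w : W) : invCount (permRep cs w) ≤ ℓ w := by
  obtain ⟨ω, hω, rfl⟩ := cs.exists_isReduced w
  exact hω.eq ▸ invCount_permRep_wordProd_le cs ω

/- Induction on `ℓ w`, splitting off a right descent `sⱼ`. If `sᵢ` and `sⱼ` commute, `w sⱼ` still
ascends at `i`; if they braid, the induction hypothesis for `w sⱼ` at `j` and for `w sⱼ` at `i` or
`w sⱼ sᵢ` at `j` pins down the relative order of the three values involved. -/
theorem permRep_castSucc_lt_succ_of_length_lt {w : W} {i : Fin n} (h : ℓ w < ℓ (w * s i)) :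
    permRep cs w i.castSucc < permRep cs w i.succ := by
  induction hk : ℓ w using Nat.strong_induction_on generalizing w i with
  | _ k ih =>
  subst hk
  rcases eq_or_ne w 1 with rfl | hw
  · simp
  obtain ⟨j, hj⟩ := cs.exists_rightDescent_of_ne_one hw
  have hj : ℓ (w * s j) < ℓ w := hj
  have hij : i ≠ j := by rintro rfl; exact lt_asymm h hj
  have hφ : permRep cs (w * s j) = permRep cs w * adjSwap j := by rw [map_mul, permRep_simple]
  by_cases hadj : j.val + 1 = i.val ∨ i.val + 1 = j.val
  · have hM : CoxeterMatrix.A n i j = 3 := by simp [CoxeterMatrix.A, hij, hadj]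
    have hvj := ih _ hj (w := w * s j) (i := j) (by rwa [simple_mul_simple_cancel_right]) rfl
    refine castSucc_lt_succ_of_adjacent hadj (hφ ▸ hvj) ?_
    rcases cs.length_mul_simple_lt_or_of_braid (cs.simple_braid_of_eq_three hM) hj h with
      hvi | ⟨hvi, hvij⟩
    · exact .inl (hφ ▸ ih _ hj hvi rfl)
    · right
      rw [← hφ, ← permRep_simple cs i, ← map_mul]
      exact ih _ (hvi.trans hj) hvij rfl
  · have hM : CoxeterMatrix.A n i j = 2 := by simp [CoxeterMatrix.A, hij, hadj]
    have hvi := ih _ hj (cs.length_mul_simple_lt_of_comm (cs.simple_mul_simple_comm_of_eq_two hM)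
      hj h) rfl
    rwa [hφ, Perm.mul_apply, Perm.mul_apply,
      adjSwap_apply_eq_of_val (x := i.castSucc) (y := i.castSucc) (by simp; omega),
      adjSwap_apply_eq_of_val (x := i.succ) (y := i.succ) (by simp; omega)] at hvi

theorem length_eq_invCount (w : W) : ℓ w = invCount (permRep cs w) := by
  refine le_antisymm ?_ (invCount_permRep_le_length cs w)
  induction hk : ℓ w using Nat.strong_induction_on generalizing w with
  | _ k ih =>
  subst hk
  rcases eq_or_ne w 1 with rfl | hw
  · simp
  obtain ⟨j, hj⟩ := cs.exists_rightDescent_of_ne_one hw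
  have hj : ℓ (w * s j) < ℓ w := hj
  have hasc := invCount_mul_adjSwap_of_lt (permRep_castSucc_lt_succ_of_length_lt cs
    (w := w * s j) (i := j) (by rwa [simple_mul_simple_cancel_right]))
  rw [← permRep_simple cs, ← map_mul, simple_mul_simple_cancel_right] at hasc
  have := ih _ hj (w * s j) rfl
  have := cs.length_mul_simple w j
  omega

theorem permRep_injective : Function.Injective (permRep cs) := by
  refine (injective_iff_map_eq_one _).2 fun w hw => ?_
  rw [← cs.length_eq_zero_iff, length_eq_invCount, hw, invCount_one]

lemma permRep_ascWord_val {a : ℕ} (ha : a ≤ n) (x : Fin (n + 1)) :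
    (permRep cs (π (ascWord a)) x).val = cycleVal n a x.val := by
  induction hk : n - a generalizing a with
  | zero =>
    obtain rfl : a = n := by omega
    rw [ascWord, List.drop_of_length_le (by simp), cs.wordProd_nil, map_one]
    have := x.isLt
    simp only [Perm.one_apply, cycleVal]
    split_ifs <;> omega
  | succ k ih =>
    rw [ascWord_eq_cons (by omega), cs.wordProd_cons, map_mul, permRep_simple, Perm.mul_apply]
    have h₁ := ih (a := a + 1) (by omega) (by omega)
    have h₂ := adjSwap_apply_val_cases ⟨a, by omega⟩ (permRep cs (π (ascWord (a + 1))) x)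
    have := x.isLt
    simp only [cycleVal] at h₁ h₂ ⊢
    split_ifs at h₁ ⊢ <;> omega

lemma permRep_revWord_val {a : ℕ} (ha : a ≤ n) (x : Fin (n + 1)) :
    (permRep cs (π (revWord (n - a) a)) x).val = revVal n a x.val := by
  induction hk : n - a generalizing a with
  | zero =>
    have := x.isLt
    simp only [revWord, cs.wordProd_nil, map_one, Perm.one_apply, revVal]
    split_ifs <;> omega
  | succ k ih =>
    rw [revWord, cs.wordProd_append, cs.wordProd_reverse, map_mul, map_inv, Perm.mul_apply,
      val_inv_apply (g := cycleInvVal n a) (permRep_ascWord_val cs ha),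
      ih (a := a + 1) (by omega) (by omega)]
    · have := x.isLt
      simp only [revVal, cycleInvVal]
      split_ifs <;> omega
    · intro v hv
      simp only [cycleVal, cycleInvVal]
      split_ifs <;> omega

lemma length_wordProd_revWord {a : ℕ} (ha : a ≤ n) :
    ℓ (π (revWord (n - a) a)) = #(pairsFrom (n := n) a) := by
  rw [length_eq_invCount, invCount, inversions_eq_pairsFrom (permRep_revWord_val cs ha)]

lemma wordProd_revWord_mem_closure (f a : ℕ) :
    π (revWord f a) ∈ Subgroup.closure (cs.simple '' {i | a ≤ i.val}) :=
  cs.wordProd_mem_closure_simple_image fun _ hi => le_of_mem_revWord hi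

lemma permRep_apply_eq_self_of_mem_closure {a : ℕ} {w : W}
    (hw : w ∈ Subgroup.closure (cs.simple '' {i | a ≤ i.val})) {x : Fin (n + 1)} (hx : x.val < a) :
    permRep cs w x = x := by
  have hle : Subgroup.closure (cs.simple '' {i | a ≤ i.val}) ≤
      (fixingSubgroup (Perm (Fin (n + 1))) {x : Fin (n + 1) | x.val < a}).comap (permRep cs) := by
    rw [Subgroup.closure_le]
    rintro _ ⟨i, hi, rfl⟩
    simp only [SetLike.mem_coe, Subgroup.mem_comap, mem_fixingSubgroup_iff, permRep_simple]
    exact fun y hy => adjSwap_apply_eq_of_val (by simp at hi hy; omega)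
  exact (mem_fixingSubgroup_iff _).1 (hle hw) x hx

lemma eq_wordProd_revWord {a : ℕ} (ha : a ≤ n) {w : W}
    (hw : w ∈ Subgroup.closure (cs.simple '' {i | a ≤ i.val}))
    (hle : cs.bruhatLE (π (revWord (n - a) a)) w) : w = π (revWord (n - a) a) := by
  refine (hle.eq_of_length_le ?_).symm
  rw [length_wordProd_revWord cs ha, length_eq_invCount]
  exact card_le_card
    (inversions_subset_pairsFrom fun _ => permRep_apply_eq_self_of_mem_closure cs hw)

lemma wordProd_revWord_one_mul_revWord_zero (hn : 1 ≤ n) :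
    π (revWord (n - 1) 1) * π (revWord (n - 0) 0) = π (ascWord (n := n) 0) := by
  refine permRep_injective cs (Perm.ext fun x => Fin.ext ?_)
  rw [map_mul, Perm.mul_apply, permRep_revWord_val cs (by omega),
    permRep_revWord_val cs (by omega), permRep_ascWord_val cs (by omega)]
  have := x.isLt
  simp only [revVal, cycleVal]
  split_ifs <;> omega

lemma isReduced_ascWord_zero (hn : 1 ≤ n) : cs.IsReduced (ascWord (n := n) 0) := by
  refine le_antisymm (cs.length_wordProd_le _) ?_
  have h := cs.length_le_length_mul_add_left (π (revWord (n - 1) 1)) (π (revWord (n - 0) 0))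
  rw [wordProd_revWord_one_mul_revWord_zero cs hn, length_wordProd_revWord cs (by omega),
    length_wordProd_revWord cs (by omega)] at h
  have : #(pairsFrom 1) + (n - 0) ≤ #(pairsFrom 0) := card_pairsFrom_succ_add_le 0
  rw [length_ascWord]
  omega

lemma wordProd_ascWord_one_mul_revWord_one (hn : 2 ≤ n) :
    π (ascWord 1) * π (revWord (n - 1) 1) = π (revWord (n - 2) 2) := by
  obtain ⟨k, hk₁, hk₂⟩ : ∃ k, n - 1 = k + 1 ∧ n - 2 = k := ⟨n - 2, by omega, rfl⟩
  rw [hk₁, hk₂, revWord, cs.wordProd_append, cs.wordProd_reverse, mul_inv_cancel_left]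

lemma length_wordProd_revWord_two_le (hn : 2 ≤ n) {u : W}
    (hu : cs.bruhatLE u (π (ascWord 0))) :
    ℓ (π (revWord (n - 2) 2)) ≤ ℓ (u * π (revWord (n - 1) 1)) := by
  rw [length_wordProd_revWord cs hn]
  rcases hu.eq_or_length_lt with rfl | hu
  · rw [length_eq_invCount]
    refine card_le_card fun p hp => ?_
    rw [mem_pairsFrom, Fin.lt_def] at hp
    rw [mem_inversions, map_mul, Perm.mul_apply, Perm.mul_apply, Fin.lt_def, Fin.lt_def,
      permRep_ascWord_val cs (by omega), permRep_ascWord_val cs (by omega),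
      permRep_revWord_val cs (by omega), permRep_revWord_val cs (by omega)]
    have := p.2.isLt
    simp only [cycleVal, revVal]
    split_ifs <;> omega
  · have h := cs.length_le_length_mul_add_left u (π (revWord (n - 1) 1))
    rw [length_wordProd_revWord cs (by omega)] at h
    rw [(isReduced_ascWord_zero cs (by omega)).eq] at hu
    have : #(pairsFrom 2) + (n - 1) ≤ #(pairsFrom 1) := card_pairsFrom_succ_add_le 1
    rw [length_ascWord] at hu
    omega

end Representation

end TypeA

open TypeA

theorem tri_typeA_first_general {W : Type*} [Group W] {n : ℕ} (hn : 2 ≤ n)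
    (cs : CoxeterSystem (CoxeterMatrix.Aₙ n) W)
    (tri : W → W → W)
    (htri : ∀ x y : W, cs.IsUniqueBruhatMin (cs.triSet x y) (tri x y))
    (w0J : Set (Fin n) → W)
    (hw0J : ∀ J : Set (Fin n), w0J J ∈ Subgroup.closure (cs.simple '' J) ∧
      ∀ v ∈ Subgroup.closure (cs.simple '' J), cs.bruhatLE v (w0J J))
 :
    tri (w0J {i : Fin n | i.val ≠ 0} * w0J Set.univ) (w0J {i : Fin n | i.val ≠ 0}) =
      w0J {i : Fin n | i.val ≠ 0 ∧ i.val ≠ 1} := by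
  have hw0J_eq : ∀ a ≤ n, w0J {i | a ≤ i.val} = cs.wordProd (revWord (n - a) a) := fun a ha =>
    eq_wordProd_revWord cs ha (hw0J _).1 ((hw0J _).2 _ (wordProd_revWord_mem_closure cs _ a))
  have hJ₁ : {i : Fin n | i.val ≠ 0} = {i | 1 ≤ i.val} := by ext; simp [Nat.one_le_iff_ne_zero]
  have hJ₂ : {i : Fin n | i.val ≠ 0 ∧ i.val ≠ 1} = {i | 2 ≤ i.val} := by ext; simp; omega
  have hJ₀ : (Set.univ : Set (Fin n)) = {i | 0 ≤ i.val} := by ext; simp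
  have hx : cs.wordProd (revWord (n - 1) 1) * cs.wordProd (revWord (n - 0) 0) =
      cs.wordProd (ascWord 0) := wordProd_revWord_one_mul_revWord_zero cs (by omega)
  rw [hJ₁, hJ₂, hJ₀, hw0J_eq 1 (by omega), hw0J_eq 0 (by omega), hw0J_eq 2 hn, hx]
  refine ((htri _ _).2 _ ⟨_, ?_, (wordProd_ascWord_one_mul_revWord_one cs hn).symm⟩ ?_).symm
  · exact ⟨ascWord 0, ascWord 1, isReduced_ascWord_zero cs (by omega), rfl,
      List.drop_sublist_drop_left _ (Nat.zero_le 1), rfl⟩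
  · rintro _ ⟨u, hu, rfl⟩ hle
    exact hle.eq_of_length_le (length_wordProd_revWord_two_le cs hn hu)

/-- In type `Aₙ` (the symmetric group on `n+1` letters, simple reflections labelled
`1, …, n`, with label `k` corresponding to the index `k - 1 : Fin n`):
`(w₀^(I - {1}) w₀^I) ▷ w₀^(I - {1}) = w₀^(I - {1, 2})`. -/
theorem tri_typeA_first {W : Type*} [Group W] [Finite W] {n : ℕ} (hn : 2 ≤ n)
    (cs : CoxeterSystem (CoxeterMatrix.Aₙ n) W)
    (tri : W → W → W)
    (htri : ∀ x y : W, cs.IsUniqueBruhatMin (cs.triSet x y) (tri x y))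
    (w0J : Set (Fin n) → W)
    (hw0J : ∀ J : Set (Fin n), w0J J ∈ Subgroup.closure (cs.simple '' J) ∧
      ∀ v ∈ Subgroup.closure (cs.simple '' J), cs.bruhatLE v (w0J J))
 :
    tri (w0J {i : Fin n | i.val ≠ 0} * w0J Set.univ) (w0J {i : Fin n | i.val ≠ 0}) =
      w0J {i : Fin n | i.val ≠ 0 ∧ i.val ≠ 1} :=
  tri_typeA_first_general hn cs tri htri w0J hw0J
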